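/- arXiv:2106.02980 — 5 statements merged into one kernel-verified Lean document; each statement's English description precedes it below -/
import Mathlib

section
/- Let C = Diag(d) where d ∈ ℝ^n satisfies d₁ ≥ d₂ ≥ ⋯ ≥ dₙ > 0, and let 0 < s < n. Then there exists an optimal solution x̂ of max{f(C,s;x) : x ∈ P(n,s)} such that x̂₁ ≥ x̂₂ ≥ ⋯ ≥ x̂ₙ and x̂ᵢ = x̂ⱼ for all i,j with dᵢ = dⱼ. -/
open Matrix Real Set

noncomputable section

/-- The feasible polytope `P(n,s)`. -/
def PP (n s : ℕ) : Set (Fin n → ℝ) :=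
  {x | (∑ i, x i) = (s : ℝ) ∧ ∀ i, 0 ≤ x i ∧ x i ≤ 1}

/-- The linx objective `f(C,s;x)`. -/
def fLinx {n : ℕ} (C : Matrix (Fin n) (Fin n) ℝ) (x : Fin n → ℝ) : ℝ :=
  (1 / 2) * Real.log ((C * Matrix.diagonal x * C + Matrix.diagonal fun i => 1 - x i).det)

/-- Objective in sum-of-logs form. -/
def Fobj {n : ℕ} (d : Fin n → ℝ) (x : Fin n → ℝ) : ℝ :=
  ∑ i, Real.log (d i ^ 2 * x i + (1 - x i))

lemma qpos {b t : ℝ} (hb : 0 < b) (h0 : 0 ≤ t) (h1 : t ≤ 1) :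
    0 < b ^ 2 * t + (1 - t) := by
  rcases eq_or_lt_of_le h0 with h | h
  · simp [← h]
  · have := mul_pos (pow_pos hb 2) h
    linarith

lemma fLinx_diag {n : ℕ} (d : Fin n → ℝ) (hpos : ∀ i, 0 < d i) (x : Fin n → ℝ)
    (hx : ∀ i, 0 ≤ x i ∧ x i ≤ 1) :
    fLinx (Matrix.diagonal d) x = (1 / 2) * Fobj d x := by
  have hdiag : Matrix.diagonal d * Matrix.diagonal x * Matrix.diagonal d
      + (Matrix.diagonal fun i => 1 - x i)
      = Matrix.diagonal (fun i => d i ^ 2 * x i + (1 - x i)) := by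
    rw [Matrix.diagonal_mul_diagonal, Matrix.diagonal_mul_diagonal, Matrix.diagonal_add]
    refine congrArg Matrix.diagonal ?_
    funext i
    simp [Pi.mul_apply]
    ring
  rw [fLinx, hdiag, Matrix.det_diagonal, Fobj, Real.log_prod]
  intro i _
  exact (qpos (hpos i) (hx i).1 (hx i).2).ne'

lemma PP_nonempty {n s : ℕ} (hsn : s < n) : ((fun _ : Fin n => (s : ℝ) / n) ∈ PP n s) := by
  have hn : (0 : ℝ) < n := by exact_mod_cast (Nat.zero_le s).trans_lt hsn
  constructor
  · rw [Finset.sum_const, Finset.card_univ, Fintype.card_fin, nsmul_eq_mul]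
    field_simp
  · intro i
    constructor
    · positivity
    · rw [div_le_one hn]
      exact_mod_cast hsn.le

lemma PP_compact {n s : ℕ} : IsCompact (PP n s) := by
  have hsub : PP n s ⊆ Icc (0 : Fin n → ℝ) 1 := by
    intro x hx
    constructor <;> intro i
    · exact (hx.2 i).1
    · exact (hx.2 i).2
  have hclosed : IsClosed (PP n s) := by
    have : PP n s = {x : Fin n → ℝ | (∑ i, x i) = (s : ℝ)} ∩ Icc 0 1 := by
      ext x
      simp only [PP, mem_inter_iff, mem_setOf_eq, mem_Icc]
      constructor
      · rintro ⟨h1, h2⟩; exact ⟨h1, fun i => (h2 i).1, fun i => (h2 i).2⟩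
      · rintro ⟨h1, h2, h3⟩; exact ⟨h1, fun i => ⟨h2 i, h3 i⟩⟩
    rw [this]
    exact (isClosed_eq (by continuity) continuous_const).inter isClosed_Icc
  exact isCompact_Icc.of_isClosed_subset hclosed hsub

lemma Fobj_continuousOn {n : ℕ} (d : Fin n → ℝ) (hpos : ∀ i, 0 < d i) {s : ℕ} :
    ContinuousOn (Fobj d) (PP n s) := by
  intro x hx
  apply ContinuousAt.continuousWithinAt
  apply tendsto_finset_sum
  intro i _
  have h1 : ContinuousAt (fun y : Fin n → ℝ => d i ^ 2 * y i + (1 - y i)) x := by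
    fun_prop
  exact ContinuousAt.comp (g := Real.log)
    (Real.continuousAt_log (qpos (hpos i) (hx.2 i).1 (hx.2 i).2).ne') h1

lemma concave_term {b : ℝ} (hb : 0 < b) :
    ConcaveOn ℝ (Icc (0 : ℝ) 1) (fun t => Real.log (b ^ 2 * t + (1 - t))) := by
  have hq : ∀ t : ℝ, 0 ≤ t → t ≤ 1 → 0 < b ^ 2 * t + (1 - t) := fun t h0 h1 => qpos hb h0 h1
  have h := strictConcaveOn_log_Ioi.concaveOn.comp_affineMap
    (AffineMap.lineMap (1 : ℝ) (b ^ 2))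
  have hsub : Icc (0 : ℝ) 1 ⊆ (AffineMap.lineMap (1 : ℝ) (b ^ 2)) ⁻¹' Ioi 0 := by
    intro t ht
    have := hq t ht.1 ht.2
    simp only [mem_preimage, AffineMap.lineMap_apply, mem_Ioi, smul_eq_mul, vsub_eq_sub,
      vadd_eq_add]
    nlinarith
  have h2 := h.subset hsub (convex_Icc 0 1)
  have he : (fun t => Real.log (b ^ 2 * t + (1 - t)))
      = Real.log ∘ (AffineMap.lineMap (1 : ℝ) (b ^ 2)) := by
    funext t
    simp only [Function.comp_apply, AffineMap.lineMap_apply, smul_eq_mul, vsub_eq_sub,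
      vadd_eq_add]
    ring_nf
  rw [he]
  exact h2

theorem stmt_1 (n s : ℕ) (hs : 0 < s) (hsn : s < n)
    (d : Fin n → ℝ) (hmono : Antitone d) (hpos : ∀ i, 0 < d i) :
    ∃ xh ∈ PP n s,
      (∀ x ∈ PP n s, fLinx (Matrix.diagonal d) x ≤ fLinx (Matrix.diagonal d) xh) ∧
      Antitone xh ∧
      (∀ i j : Fin n, d i = d j → xh i = xh j) := by
  classical
  obtain ⟨y, hyP, hy⟩ := PP_compact.exists_isMaxOn ⟨_, PP_nonempty hsn⟩
    (Fobj_continuousOn d hpos)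
  have hymax : ∀ x ∈ PP n s, Fobj d x ≤ Fobj d y := fun x hx => hy hx
  set S : Fin n → Finset (Fin n) := fun i => Finset.univ.filter (fun j => d j = d i) with hS
  set xh : Fin n → ℝ := fun i => (∑ j ∈ S i, y j) / (S i).card with hxh
  have hmemS : ∀ i, i ∈ S i := fun i => Finset.mem_filter.2 ⟨Finset.mem_univ i, rfl⟩
  have hcard : ∀ i, 0 < ((S i).card : ℝ) := by
    intro i
    have : 0 < (S i).card := Finset.card_pos.2 ⟨i, hmemS i⟩
    exact_mod_cast this
  have hconst : ∀ i j, d i = d j → xh i = xh j := by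
    intro i j hij
    have : S i = S j := by
      simp only [hS]
      congr 1
      funext k
      rw [hij]
    simp only [hxh, this]
  -- fiberwise decomposition
  have hfiber : ∀ h : Fin n → ℝ, ∑ i, h i
      = ∑ b ∈ Finset.univ.image d, ∑ i ∈ Finset.univ.filter (fun i => d i = b), h i :=
    fun h => (Finset.sum_fiberwise_of_maps_to
      (fun i _ => Finset.mem_image_of_mem d (Finset.mem_univ i)) h).symm
  -- on any fiber, xh is the average of y
  have hxh_fiber : ∀ (b : ℝ) (i : Fin n), d i = b →
      xh i = (∑ j ∈ Finset.univ.filter (fun j => d j = b), y j)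
        / ((Finset.univ.filter (fun j => d j = b)).card : ℝ) := by
    intro b i hib
    have : S i = Finset.univ.filter (fun j => d j = b) := by
      simp only [hS]
      congr 1
      funext k
      rw [hib]
    simp only [hxh, this]
  -- bounds for xh
  have hxh01 : ∀ i, 0 ≤ xh i ∧ xh i ≤ 1 := by
    intro i
    constructor
    · apply div_nonneg _ (hcard i).le
      exact Finset.sum_nonneg fun j _ => (hyP.2 j).1
    · rw [div_le_one (hcard i)]
      calc ∑ j ∈ S i, y j ≤ ∑ j ∈ S i, 1 :=
            Finset.sum_le_sum fun j _ => (hyP.2 j).2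
        _ = ((S i).card : ℝ) := by simp
  -- sum of xh equals sum of y
  have hsum : ∑ i, xh i = ∑ i, y i := by
    rw [hfiber xh, hfiber y]
    apply Finset.sum_congr rfl
    intro b hb
    obtain ⟨i₀, -, hi₀⟩ := Finset.mem_image.1 hb
    set T := Finset.univ.filter (fun j => d j = b) with hT
    have hTcard : 0 < (T.card : ℝ) := by
      have : 0 < T.card := Finset.card_pos.2 ⟨i₀, Finset.mem_filter.2 ⟨Finset.mem_univ _, hi₀⟩⟩
      exact_mod_cast this
    have : ∀ i ∈ T, xh i = (∑ j ∈ T, y j) / (T.card : ℝ) := by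
      intro i hi
      exact hxh_fiber b i (Finset.mem_filter.1 hi).2
    rw [Finset.sum_congr rfl this, Finset.sum_const, nsmul_eq_mul]
    field_simp
  have hxhP : xh ∈ PP n s := ⟨by rw [hsum]; exact hyP.1, hxh01⟩
  -- Jensen: Fobj d y ≤ Fobj d xh
  have hFle : Fobj d y ≤ Fobj d xh := by
    rw [Fobj, Fobj, hfiber (fun i => Real.log (d i ^ 2 * y i + (1 - y i))),
      hfiber (fun i => Real.log (d i ^ 2 * xh i + (1 - xh i)))]
    apply Finset.sum_le_sum
    intro b hb
    obtain ⟨i₀, -, hi₀⟩ := Finset.mem_image.1 hb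
    set T := Finset.univ.filter (fun j => d j = b) with hT
    have hbpos : 0 < b := hi₀ ▸ hpos i₀
    have hTcard : 0 < (T.card : ℝ) := by
      have : 0 < T.card := Finset.card_pos.2 ⟨i₀, Finset.mem_filter.2 ⟨Finset.mem_univ _, hi₀⟩⟩
      exact_mod_cast this
    set m := (∑ j ∈ T, y j) / (T.card : ℝ) with hm
    have hxhT : ∀ i ∈ T, xh i = m := fun i hi => hxh_fiber b i (Finset.mem_filter.1 hi).2
    have hdT : ∀ i ∈ T, d i = b := fun i hi => (Finset.mem_filter.1 hi).2
    have hj := (concave_term hbpos).le_map_sum (t := T) (w := fun _ => ((T.card : ℝ))⁻¹)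
      (p := y) (fun i _ => by positivity)
      (by rw [Finset.sum_const, nsmul_eq_mul]; field_simp)
      (fun i _ => ⟨(hyP.2 i).1, (hyP.2 i).2⟩)
    have hmeq : ∑ i ∈ T, ((T.card : ℝ))⁻¹ • y i = m := by
      simp only [smul_eq_mul, ← Finset.mul_sum, hm]
      rw [div_eq_inv_mul]
    rw [hmeq] at hj
    simp only [smul_eq_mul, ← Finset.mul_sum] at hj
    rw [inv_mul_le_iff₀ hTcard] at hj
    calc ∑ i ∈ T, Real.log (d i ^ 2 * y i + (1 - y i))
        = ∑ i ∈ T, Real.log (b ^ 2 * y i + (1 - y i)) := by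
          apply Finset.sum_congr rfl; intro i hi; rw [hdT i hi]
      _ ≤ (T.card : ℝ) * Real.log (b ^ 2 * m + (1 - m)) := hj
      _ = ∑ i ∈ T, Real.log (d i ^ 2 * xh i + (1 - xh i)) := by
          rw [Finset.sum_congr rfl (fun i hi => by rw [hdT i hi, hxhT i hi]),
            Finset.sum_const, nsmul_eq_mul]
  have hxhmax : ∀ x ∈ PP n s, Fobj d x ≤ Fobj d xh :=
    fun x hx => (hymax x hx).trans hFle
  -- swap argument: bigger d gets bigger xh
  have hdle : ∀ i j : Fin n, d j < d i → xh j ≤ xh i := by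
    intro i j hdji
    by_contra hcon
    push_neg at hcon
    have hij : i ≠ j := fun h => absurd (h ▸ rfl) hdji.ne'
    set z : Fin n → ℝ := Function.update (Function.update xh i (xh j)) j (xh i) with hz
    have hzi : z i = xh j := by
      rw [hz, Function.update_of_ne hij, Function.update_self]
    have hzj : z j = xh i := by rw [hz, Function.update_self]
    have hzk : ∀ k, k ≠ i → k ≠ j → z k = xh k := by
      intro k hki hkj
      rw [hz, Function.update_of_ne hkj, Function.update_of_ne hki]
    have hsplit : ∀ h : Fin n → ℝ, ∑ k, h k
        = h j + (h i + ∑ k ∈ (Finset.univ.erase j).erase i, h k) := by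
      intro h
      rw [Finset.add_sum_erase _ _ (Finset.mem_erase.2 ⟨hij, Finset.mem_univ i⟩),
        Finset.add_sum_erase _ _ (Finset.mem_univ j)]
    have hrest : ∑ k ∈ (Finset.univ.erase j).erase i, z k
        = ∑ k ∈ (Finset.univ.erase j).erase i, xh k := by
      apply Finset.sum_congr rfl
      intro k hk
      have hk' := Finset.mem_erase.1 hk
      exact hzk k hk'.1 (Finset.mem_erase.1 hk'.2).1
    have hzP : z ∈ PP n s := by
      constructor
      · show ∑ k, z k = (s : ℝ)
        rw [hsplit z, hzi, hzj, hrest]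
        have h2 := hxhP.1
        rw [hsplit xh] at h2
        linarith
      · intro k
        by_cases hki : k = i
        · rw [hki, hzi]; exact hxh01 j
        · by_cases hkj : k = j
          · rw [hkj, hzj]; exact hxh01 i
          · rw [hzk k hki hkj]; exact hxh01 k
    -- strict increase of Fobj
    have hqi := qpos (hpos i) (hxh01 i).1 (hxh01 i).2
    have hqj := qpos (hpos j) (hxh01 j).1 (hxh01 j).2
    have hqij : 0 < d i ^ 2 * xh j + (1 - xh j) := qpos (hpos i) (hxh01 j).1 (hxh01 j).2
    have hqji : 0 < d j ^ 2 * xh i + (1 - xh i) := qpos (hpos j) (hxh01 i).1 (hxh01 i).2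
    have hprod : (d i ^ 2 * xh i + (1 - xh i)) * (d j ^ 2 * xh j + (1 - xh j))
        < (d i ^ 2 * xh j + (1 - xh j)) * (d j ^ 2 * xh i + (1 - xh i)) := by
      nlinarith [mul_pos (sub_pos.2 (by nlinarith [hpos i, hpos j] : d j ^ 2 < d i ^ 2))
        (sub_pos.2 hcon)]
    have hlog : Real.log (d i ^ 2 * xh i + (1 - xh i)) + Real.log (d j ^ 2 * xh j + (1 - xh j))
        < Real.log (d i ^ 2 * xh j + (1 - xh j)) + Real.log (d j ^ 2 * xh i + (1 - xh i)) := by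
      rw [← Real.log_mul hqi.ne' hqj.ne', ← Real.log_mul hqij.ne' hqji.ne']
      exact Real.log_lt_log (mul_pos hqi hqj) hprod
    have hgt : Fobj d xh < Fobj d z := by
      rw [Fobj, Fobj, hsplit (fun k => Real.log (d k ^ 2 * z k + (1 - z k))),
        hsplit (fun k => Real.log (d k ^ 2 * xh k + (1 - xh k)))]
      simp only [hzi, hzj]
      have : ∑ k ∈ (Finset.univ.erase j).erase i, Real.log (d k ^ 2 * z k + (1 - z k))
          = ∑ k ∈ (Finset.univ.erase j).erase i, Real.log (d k ^ 2 * xh k + (1 - xh k)) := by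
        apply Finset.sum_congr rfl
        intro k hk
        have hk' := Finset.mem_erase.1 hk
        rw [hzk k hk'.1 (Finset.mem_erase.1 hk'.2).1]
      rw [this]
      linarith
    exact absurd (hxhmax z hzP) (not_le.2 hgt)
  have hanti : Antitone xh := by
    intro i j hij
    rcases eq_or_lt_of_le (hmono hij) with h | h
    · exact (hconst j i h).le
    · exact hdle i j h
  refine ⟨xh, hxhP, ?_, hanti, hconst⟩
  intro x hx
  rw [fLinx_diag d hpos x hx.2, fLinx_diag d hpos xh hxh01]
  have := hxhmax x hx
  linarith
end
end

section
/- Let C = Diag(d) where d ∈ ℝ^n satisfies d₁ ≥ d₂ ≥ ⋯ ≥ dₙ > 0, let 0 < s < n, and let x̂ be a uniform optimal solution of max{f(C,s;x) : x ∈ P(n,s)} (i.e., an optimal solution with x̂₁ ≥ x̂₂ ≥ ⋯ ≥ x̂ₙ and x̂ᵢ = x̂ⱼ whenever dᵢ = dⱼ). Then for all 1 ≤ i < j ≤ n: (dⱼ²−1)/((dⱼ²−1)·x̂ⱼ+1) ≤ (dᵢ²−1)/((dᵢ²−1)·x̂ᵢ+1). Moreover, if additionally 1 > x̂ᵢ ≥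 x̂ⱼ > 0, then (dⱼ²−1)/((dⱼ²−1)·x̂ⱼ+1) = (dᵢ²−1)/((dᵢ²−1)·x̂ᵢ+1). -/
open Matrix Real Set

noncomputable section

lemma pos_aux {d x : ℝ} (hd : 0 < d) (h0 : 0 ≤ x) (h1 : x ≤ 1) :
    0 < (d ^ 2 - 1) * x + 1 := by
  rcases le_or_gt 1 (d ^ 2) with h | h
  · nlinarith [mul_nonneg (by linarith : (0:ℝ) ≤ d ^ 2 - 1) h0]
  · nlinarith [mul_nonneg (by linarith : (0:ℝ) ≤ 1 - x) (by linarith : (0:ℝ) ≤ 1 - d ^ 2),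
      pow_pos hd 2]

lemma fLinx_diag_s3 {n : ℕ} (d x : Fin n → ℝ) :
    fLinx (Matrix.diagonal d) x
      = (1 / 2) * Real.log (∏ k, ((d k ^ 2 - 1) * x k + 1)) := by
  unfold fLinx
  rw [Matrix.diagonal_mul_diagonal, Matrix.diagonal_mul_diagonal, Matrix.diagonal_add,
    Matrix.det_diagonal]
  congr 1
  exact congrArg Real.log (Finset.prod_congr rfl fun k _ => by ring)

set_option maxHeartbeats 1000000 in
theorem stmt_3 (n s : ℕ) (hs : 0 < s) (hsn : s < n)
    (d : Fin n → ℝ) (hmono : Antitone d) (hpos : ∀ i, 0 < d i)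
    (xh : Fin n → ℝ) (hxhP : xh ∈ PP n s)
    (hopt : ∀ x ∈ PP n s, fLinx (Matrix.diagonal d) x ≤ fLinx (Matrix.diagonal d) xh)
    (hxhmono : Antitone xh) (hxhunif : ∀ i j : Fin n, d i = d j → xh i = xh j) :
    ∀ i j : Fin n, i < j →
      ((d j ^ 2 - 1) / ((d j ^ 2 - 1) * xh j + 1)
          ≤ (d i ^ 2 - 1) / ((d i ^ 2 - 1) * xh i + 1)) ∧
      (xh i < 1 → xh j ≤ xh i → 0 < xh j →
        (d j ^ 2 - 1) / ((d j ^ 2 - 1) * xh j + 1)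
          = (d i ^ 2 - 1) / ((d i ^ 2 - 1) * xh i + 1)) := by
  obtain ⟨hsum, hbd⟩ := hxhP
  -- the exchange / first-order optimality argument
  have exch : ∀ p q : Fin n, p ≠ q → 0 < xh p → xh q < 1 →
      (d q ^ 2 - 1) / ((d q ^ 2 - 1) * xh q + 1)
        ≤ (d p ^ 2 - 1) / ((d p ^ 2 - 1) * xh p + 1) := by
    intro p q hpq hp0 hq1
    have hap0 : 0 < (d p ^ 2 - 1) * xh p + 1 := pos_aux (hpos p) (hbd p).1 (hbd p).2
    have haq0 : 0 < (d q ^ 2 - 1) * xh q + 1 := pos_aux (hpos q) (hbd q).1 (hbd q).2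
    by_contra hcon
    push_neg at hcon
    set up := d p ^ 2 - 1 with hupdef
    set uq := d q ^ 2 - 1 with huqdef
    set ap := up * xh p + 1 with hapdef
    set aq := uq * xh q + 1 with haqdef
    have hδ : 0 < uq * ap - up * aq := by
      have := (div_lt_div_iff₀ hap0 haq0).mp hcon
      linarith
    have hM0 : (0:ℝ) < |up * uq| + 1 := by positivity
    set t := min (min (xh p) (1 - xh q)) ((uq * ap - up * aq) / (|up * uq| + 1)) with htdef
    have ht0 : 0 < t := lt_min (lt_min hp0 (by linarith)) (div_pos hδ hM0)
    have htp : t ≤ xh p := le_trans (min_le_left _ _) (min_le_left _ _)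
    have htq : t ≤ 1 - xh q := le_trans (min_le_left _ _) (min_le_right _ _)
    have htM : t * (|up * uq| + 1) ≤ uq * ap - up * aq := by
      have h1 : t ≤ (uq * ap - up * aq) / (|up * uq| + 1) := min_le_right _ _
      calc t * (|up * uq| + 1) ≤ ((uq * ap - up * aq) / (|up * uq| + 1)) * (|up * uq| + 1) := by
            nlinarith
        _ = uq * ap - up * aq := by field_simp
    set x' := Function.update (Function.update xh p (xh p - t)) q (xh q + t) with hx'def
    have hx'q : x' q = xh q + t := by simp [hx'def]
    have hx'p : x' p = xh p - t := by
      simp [hx'def, Function.update_apply, hpq, Ne.symm hpq]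
    have hx'k : ∀ k, k ≠ p → k ≠ q → x' k = xh k := by
      intro k hkp hkq
      simp [hx'def, Function.update_apply, hkp, hkq]
    have hbd' : ∀ k, 0 ≤ x' k ∧ x' k ≤ 1 := by
      intro k
      by_cases hkq : k = q
      · rw [hkq, hx'q]
        constructor
        · linarith [(hbd q).1]
        · linarith
      · by_cases hkp : k = p
        · rw [hkp, hx'p]
          constructor
          · linarith
          · linarith [(hbd p).2]
        · rw [hx'k k hkp hkq]; exact hbd k
    have hpq' : p ∈ Finset.univ.erase q := Finset.mem_erase.mpr ⟨hpq, Finset.mem_univ p⟩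
    have hpq'' : p ∈ Finset.univ \ {q} := by simp [hpq]
    have hx'P : x' ∈ PP n s := by
      refine ⟨?_, hbd'⟩
      rw [hx'def, Finset.sum_update_of_mem (Finset.mem_univ q),
        Finset.sum_update_of_mem hpq'']
      simp only [← Finset.erase_eq]
      rw [← hsum, ← Finset.add_sum_erase _ xh (Finset.mem_univ q),
        ← Finset.add_sum_erase _ xh hpq']
      ring
    have key := hopt x' hx'P
    rw [fLinx_diag_s3, fLinx_diag_s3] at key
    have hP'pos : 0 < ∏ k, ((d k ^ 2 - 1) * x' k + 1) :=
      Finset.prod_pos fun k _ => pos_aux (hpos k) (hbd' k).1 (hbd' k).2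
    have hPpos : 0 < ∏ k, ((d k ^ 2 - 1) * xh k + 1) :=
      Finset.prod_pos fun k _ => pos_aux (hpos k) (hbd k).1 (hbd k).2
    have hlog : Real.log (∏ k, ((d k ^ 2 - 1) * x' k + 1))
        ≤ Real.log (∏ k, ((d k ^ 2 - 1) * xh k + 1)) := by linarith
    have hPle : (∏ k, ((d k ^ 2 - 1) * x' k + 1)) ≤ ∏ k, ((d k ^ 2 - 1) * xh k + 1) :=
      (Real.log_le_log_iff hP'pos hPpos).mp hlog
    set R := ∏ k ∈ (Finset.univ.erase q).erase p, ((d k ^ 2 - 1) * xh k + 1) with hRdef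
    have hRpos : 0 < R :=
      Finset.prod_pos fun k _ => pos_aux (hpos k) (hbd k).1 (hbd k).2
    have hdecomp : (∏ k, ((d k ^ 2 - 1) * xh k + 1)) = aq * (ap * R) := by
      rw [← Finset.mul_prod_erase _ _ (Finset.mem_univ q), ← Finset.mul_prod_erase _ _ hpq']
    have hdecomp' : (∏ k, ((d k ^ 2 - 1) * x' k + 1))
        = (aq + uq * t) * ((ap - up * t) * R) := by
      rw [← Finset.mul_prod_erase _ _ (Finset.mem_univ q), ← Finset.mul_prod_erase _ _ hpq']
      have h1 : (d q ^ 2 - 1) * x' q + 1 = aq + uq * t := by rw [hx'q]; ring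
      have h2 : (d p ^ 2 - 1) * x' p + 1 = ap - up * t := by rw [hx'p]; ring
      rw [h1, h2]
      congr 1
      congr 1
      refine Finset.prod_congr rfl fun k hk => ?_
      obtain ⟨hkp, hk2⟩ := Finset.mem_erase.mp hk
      obtain ⟨hkq, _⟩ := Finset.mem_erase.mp hk2
      rw [hx'k k hkp hkq]
    rw [hdecomp, hdecomp'] at hPle
    have hmain : (aq + uq * t) * (ap - up * t) ≤ aq * ap := by
      have h : ((aq + uq * t) * (ap - up * t)) * R ≤ (aq * ap) * R := by
        rw [mul_assoc, mul_assoc]; exact hPle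
      exact le_of_mul_le_mul_right h hRpos
    clear_value up uq ap aq t x' R
    have hfin1 : (uq * ap - up * aq) * t ≤ (up * uq) * (t * t) := by nlinarith [hmain]
    have hfin2 : (up * uq) * (t * t) ≤ |up * uq| * (t * t) :=
      mul_le_mul_of_nonneg_right (le_abs_self _) (by positivity)
    have hfin3 : (t * (|up * uq| + 1)) * t ≤ (uq * ap - up * aq) * t :=
      mul_le_mul_of_nonneg_right htM ht0.le
    nlinarith [mul_pos ht0 ht0, hfin1, hfin2, hfin3]
  intro i j hij
  have hij' : i ≠ j := ne_of_lt hij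
  have hdji : d j ≤ d i := hmono hij.le
  have hu : d j ^ 2 ≤ d i ^ 2 := by nlinarith [hpos i, hpos j]
  have hai0 : 0 < (d i ^ 2 - 1) * xh i + 1 := pos_aux (hpos i) (hbd i).1 (hbd i).2
  have haj0 : 0 < (d j ^ 2 - 1) * xh j + 1 := pos_aux (hpos j) (hbd j).1 (hbd j).2
  constructor
  · by_cases hj1 : xh j = 1
    · have hi1 : xh i = 1 := le_antisymm (hbd i).2 (hj1 ▸ hxhmono hij.le)
      rw [hi1, hj1]
      rw [div_le_div_iff₀ (by nlinarith [pow_pos (hpos j) 2] : (0:ℝ) < (d j ^ 2 - 1) * 1 + 1)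
        (by nlinarith [pow_pos (hpos i) 2] : (0:ℝ) < (d i ^ 2 - 1) * 1 + 1)]
      nlinarith
    · by_cases hi0 : xh i = 0
      · have hj0 : xh j = 0 := le_antisymm (hi0 ▸ hxhmono hij.le) (hbd j).1
        rw [hi0, hj0]
        norm_num
        linarith
      · exact exch i j hij' (lt_of_le_of_ne (hbd i).1 (Ne.symm hi0))
          (lt_of_le_of_ne (hbd j).2 hj1)
  · intro hi1 hji hj0
    have h1 := exch i j hij' (lt_of_lt_of_le hj0 hji) (lt_of_le_of_lt hji hi1)
    have h2 := exch j i (Ne.symm hij') hj0 hi1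
    linarith
end
end

section
/- Let C = Diag(d) where d ∈ ℝ^n satisfies d₁ ≥ d₂ ≥ ⋯ ≥ dₙ > 0, let 0 < s < n, and set G := {i : dᵢ > 1}, E := {i : dᵢ = 1}, and L := {i : dᵢ < 1}. Suppose |G| < s ≤ |G| + |E|. Then every vector x̂ defined by x̂ᵢ = 1 for i ∈ G, x̂ᵢ = 0 for i ∈ L, and arbitrary values 0 ≤ x̂ᵢ ≤ 1 for i ∈ E with ∑_{i∈E} x̂ᵢ = s − |G|, is an optimal solution of max{f(C,s;x) : x ∈ P(n,s)}. -/
open Matrix Real Set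

noncomputable section

lemma arg_pos {n : ℕ} (d x : Fin n → ℝ) (hpos : ∀ i, 0 < d i)
    (hx : ∀ i, 0 ≤ x i ∧ x i ≤ 1) (i : Fin n) :
    0 < d i * x i * d i + (1 - x i) := by
  rcases lt_or_ge (x i) 1 with h | h
  · have h1 : 0 ≤ d i * x i * d i := mul_nonneg (mul_nonneg (hpos i).le (hx i).1) (hpos i).le
    linarith
  · have hx1 : x i = 1 := le_antisymm (hx i).2 h
    rw [hx1]
    have := mul_pos (hpos i) (hpos i)
    nlinarith

lemma flinx_diag {n : ℕ} (d x : Fin n → ℝ) (hpos : ∀ i, 0 < d i)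
    (hx : ∀ i, 0 ≤ x i ∧ x i ≤ 1) :
    fLinx (Matrix.diagonal d) x
      = (1 / 2) * ∑ i, Real.log (d i * x i * d i + (1 - x i)) := by
  unfold fLinx
  rw [Matrix.diagonal_mul_diagonal, Matrix.diagonal_mul_diagonal, Matrix.diagonal_add,
    Matrix.det_diagonal, Real.log_prod]
  intro i _
  exact (arg_pos d x hpos hx i).ne'

lemma tri_sum {n : ℕ} (d : Fin n → ℝ) (f : Fin n → ℝ) :
    ∑ i, f i = ∑ i ∈ Finset.univ.filter (fun i => 1 < d i), f i
      + ∑ i ∈ Finset.univ.filter (fun i => d i = 1), f i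
      + ∑ i ∈ Finset.univ.filter (fun i => d i < 1), f i := by
  rw [Finset.sum_filter, Finset.sum_filter, Finset.sum_filter, ← Finset.sum_add_distrib,
    ← Finset.sum_add_distrib]
  apply Finset.sum_congr rfl
  intro i _
  rcases lt_trichotomy (d i) 1 with h | h | h
  · simp [h, not_lt_of_gt h, ne_of_lt h]
  · simp [h]
  · simp [h, not_lt_of_gt h, (ne_of_gt h)]

theorem stmt_6 (n s : ℕ) (hs : 0 < s) (hsn : s < n)
    (d : Fin n → ℝ) (hmono : Antitone d) (hpos : ∀ i, 0 < d i)
    (G E L : Finset (Fin n))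
    (hG : G = Finset.univ.filter fun i => 1 < d i)
    (hE : E = Finset.univ.filter fun i => d i = 1)
    (hL : L = Finset.univ.filter fun i => d i < 1)
    (hcard : G.card < s ∧ s ≤ G.card + E.card)
    (xh : Fin n → ℝ)
    (hxhG : ∀ i ∈ G, xh i = 1) (hxhL : ∀ i ∈ L, xh i = 0)
    (hxhE : ∀ i ∈ E, 0 ≤ xh i ∧ xh i ≤ 1)
    (hxhEsum : ∑ i ∈ E, xh i = (s : ℝ) - (G.card : ℝ)) :
    xh ∈ PP n s ∧
      ∀ x ∈ PP n s, fLinx (Matrix.diagonal d) x ≤ fLinx (Matrix.diagonal d) xh := by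
  have hxh01 : ∀ i, 0 ≤ xh i ∧ xh i ≤ 1 := by
    intro i
    rcases lt_trichotomy (d i) 1 with h | h | h
    · rw [hxhL i (by rw [hL]; simp [h])]; norm_num
    · exact hxhE i (by rw [hE]; simp [h])
    · rw [hxhG i (by rw [hG]; simp [h])]; norm_num
  have hsum : ∑ i, xh i = (s : ℝ) := by
    rw [tri_sum d xh, ← hG, ← hE, ← hL]
    have h1 : ∑ i ∈ G, xh i = (G.card : ℝ) := by
      rw [Finset.sum_congr rfl hxhG]; simp
    have h3 : ∑ i ∈ L, xh i = 0 := Finset.sum_eq_zero hxhL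
    rw [h1, hxhEsum, h3]; ring
  refine ⟨⟨hsum, hxh01⟩, ?_⟩
  intro x hx
  obtain ⟨hxs, hx01⟩ := hx
  rw [flinx_diag d x hpos hx01, flinx_diag d xh hpos hxh01]
  have hhalf : (0:ℝ) ≤ 1 / 2 := by norm_num
  apply mul_le_mul_of_nonneg_left _ hhalf
  apply Finset.sum_le_sum
  intro i _
  rcases lt_trichotomy (d i) 1 with h | h | h
  · rw [hxhL i (by rw [hL]; simp [h])]
    have e1 : d i * 0 * d i + (1 - 0) = 1 := by ring
    rw [e1, Real.log_one]
    apply Real.log_nonpos (arg_pos d x hpos hx01 i).le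
    have hmul : 0 ≤ x i * (1 - d i * d i) :=
      mul_nonneg (hx01 i).1 (by nlinarith [hpos i])
    nlinarith [hmul]
  · have e1 : d i * x i * d i + (1 - x i) = 1 := by rw [h]; ring
    have e2 : d i * xh i * d i + (1 - xh i) = 1 := by rw [h]; ring
    rw [e1, e2]
  · rw [hxhG i (by rw [hG]; simp [h])]
    apply Real.log_le_log (arg_pos d x hpos hx01 i)
    have hmul : 0 ≤ (1 - x i) * (d i * d i - 1) :=
      mul_nonneg (sub_nonneg.2 (hx01 i).2) (by nlinarith)
    nlinarith [hmul]
end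
end

section
/- Let C₂ = [[a,c],[c,b]] be a 2×2 real symmetric positive-semidefinite matrix with a ≥ b, and take s = 1. Define m* ∈ [0,1] by: m* := 0 if c = 0 or ab ≤ 1; m* := 1 if c ≠ 0 and ab − 1 ≥ c²; and m* := √((ab−1)/c²) if c ≠ 0 and 0 < ab − 1 < c². Then the mask M* = [[1,m*],[m*,1]] is an optimal mask: linx(C₂,1;M*) ≤ linx(C₂,1;M) for every order-2 mask M. -/
open Matrix Real Set

noncomputable section

/-- A mask of order `n`: a positive-semidefinite matrix with unit diagonal. -/
def IsMask {n : ℕ} (M : Matrix (Fin n) (Fin n) ℝ) : Prop :=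
  M.PosSemidef ∧ ∀ i, M i i = 1

/-- The masked linx bound `linx(C,s;M)`. -/
def linxMask (n s : ℕ) (C M : Matrix (Fin n) (Fin n) ℝ) : ℝ :=
  sSup (fLinx (Matrix.hadamard C M) '' PP n s)

/-!
For `x ∈ P(2,1)` and the masked matrix `!![a, t; t, b]` with `t = c m`, the determinant in the
linx objective is `(a x₀ + b x₁)² + x₀ x₁ (t² - (ab - 1))²`. So at every feasible `x` the objective
only decreases as `t²` approaches `ab - 1`. A mask allows exactly `t² ∈ [0, c²]`, and `m*` is chosen
so that `(c m*)²` is the projection of `ab - 1` onto this interval; it therefore minimises the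
objective pointwise in `x`, hence also its supremum.
-/

theorem isCompact_PP (n s : ℕ) : IsCompact (PP n s) := by
  have hbox : IsCompact (Set.univ.pi fun _ : Fin n => Set.Icc (0 : ℝ) 1) :=
    isCompact_univ_pi fun _ => isCompact_Icc
  have hsum : IsClosed {x : Fin n → ℝ | ∑ i, x i = s} :=
    isClosed_eq (by fun_prop) continuous_const
  convert hbox.inter_right hsum using 1
  ext x
  simp only [PP, Set.mem_ofPred_eq, Set.mem_inter_iff, Set.mem_univ_pi, Set.mem_Icc]
  tauto

theorem bddAbove_fLinx_image {n : ℕ} (C : Matrix (Fin n) (Fin n) ℝ) (s : ℕ) :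
    BddAbove (fLinx C '' PP n s) := by
  have hcont : Continuous fun x : Fin n → ℝ =>
      (1 / 2) * |(C * diagonal x * C + diagonal fun i => 1 - x i).det| := by
    fun_prop
  obtain ⟨B, hB⟩ := ((isCompact_PP n s).image hcont).bddAbove
  refine ⟨B, ?_⟩
  rintro _ ⟨x, hx, rfl⟩
  refine le_trans ?_ (hB ⟨x, hx, rfl⟩)
  rw [fLinx, ← Real.log_abs]
  exact mul_le_mul_of_nonneg_left (Real.log_le_self (abs_nonneg _)) (by norm_num)

theorem mem_PP_two_one {x : Fin 2 → ℝ} :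
    x ∈ PP 2 1 ↔ x 0 + x 1 = 1 ∧ ∀ i, 0 ≤ x i ∧ x i ≤ 1 := by
  simp [PP, Fin.sum_univ_two]

theorem det_linx_fin_two (a b t : ℝ) {x : Fin 2 → ℝ} (hx : x 0 + x 1 = 1) :
    (!![a, t; t, b] * diagonal x * !![a, t; t, b] + diagonal fun i => 1 - x i).det
      = (a * x 0 + b * x 1) ^ 2 + x 0 * x 1 * (t ^ 2 - (a * b - 1)) ^ 2 := by
  have hx1 : x 1 = 1 - x 0 := by linarith
  rw [diagonal_fin_two, diagonal_fin_two, hx1]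
  simp [det_fin_two]
  ring

theorem fLinx_fin_two_le_of_sq_le {a b t₁ t₂ : ℝ} (ha : 0 < a) (hb : 0 < b)
    (ht : (t₁ ^ 2 - (a * b - 1)) ^ 2 ≤ (t₂ ^ 2 - (a * b - 1)) ^ 2)
    {x : Fin 2 → ℝ} (hx : x ∈ PP 2 1) :
    fLinx !![a, t₁; t₁, b] x ≤ fLinx !![a, t₂; t₂, b] x := by
  obtain ⟨hsum, hx01⟩ := mem_PP_two_one.1 hx
  obtain ⟨hx0, -⟩ := hx01 0
  obtain ⟨hx1, -⟩ := hx01 1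
  have hlin : 0 < a * x 0 + b * x 1 := by
    nlinarith [lt_min ha hb, min_le_left a b, min_le_right a b]
  unfold fLinx
  rw [det_linx_fin_two a b t₁ hsum, det_linx_fin_two a b t₂ hsum]
  gcongr

theorem sSup_fLinx_fin_two_le_of_sq_le {a b t₁ t₂ : ℝ} (ha : 0 < a) (hb : 0 < b)
    (ht : (t₁ ^ 2 - (a * b - 1)) ^ 2 ≤ (t₂ ^ 2 - (a * b - 1)) ^ 2) :
    sSup (fLinx !![a, t₁; t₁, b] '' PP 2 1) ≤ sSup (fLinx !![a, t₂; t₂, b] '' PP 2 1) := by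
  have hne : (PP 2 1).Nonempty :=
    ⟨![1, 0], mem_PP_two_one.2 ⟨by simp, by simp [Fin.forall_fin_two]⟩⟩
  refine csSup_le (hne.image _) ?_
  rintro _ ⟨x, hx, rfl⟩
  exact (fLinx_fin_two_le_of_sq_le ha hb ht hx).trans
    (le_csSup (bddAbove_fLinx_image _ 1) ⟨x, hx, rfl⟩)

theorem IsMask.exists_eq_fin_two {M : Matrix (Fin 2) (Fin 2) ℝ} (hM : IsMask M) :
    ∃ m : ℝ, m ^ 2 ≤ 1 ∧ M = !![1, m; m, 1] := by
  obtain ⟨hpsd, hdiag⟩ := hM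
  have hsymm : M 1 0 = M 0 1 := by simpa using congrFun (congrFun hpsd.1 0) 1
  have hMeq : M = !![1, M 0 1; M 0 1, 1] := by
    ext i j
    fin_cases i <;> fin_cases j <;> simp [hdiag, hsymm]
  refine ⟨M 0 1, ?_, hMeq⟩
  have hdet := hpsd.det_nonneg
  rw [hMeq, det_fin_two_of] at hdet
  linarith

theorem hadamard_mask_fin_two (a b c m : ℝ) :
    !![a, c; c, b] ⊙ !![1, m; m, 1] = !![a, c * m; c * m, b] := by
  ext i j
  fin_cases i <;> fin_cases j <;> simp

theorem Matrix.PosSemidef.pos_of_fin_two {a b c : ℝ} (hC : (!![a, c; c, b]).PosSemidef)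
    (hc : c ≠ 0) : 0 < a ∧ 0 < b := by
  have ha : 0 ≤ a := by simpa using hC.diag_nonneg (i := 0)
  have hb : 0 ≤ b := by simpa using hC.diag_nonneg (i := 1)
  have hdet : c ^ 2 ≤ a * b := by
    have := hC.det_nonneg
    rw [det_fin_two_of] at this
    linarith
  have hab : 0 < a * b := lt_of_lt_of_le (by positivity) hdet
  exact ⟨lt_of_le_of_ne ha (by rintro rfl; simp at hab),
    lt_of_le_of_ne hb (by rintro rfl; simp at hab)⟩

theorem sq_max_min_sub_le {lo hi u v : ℝ} (hu : u ∈ Set.Icc lo hi) :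
    (max lo (min v hi) - v) ^ 2 ≤ (u - v) ^ 2 := by
  obtain ⟨hlo, hhi⟩ := hu
  rcases le_total v hi with hv | hv
  · rcases le_total lo v with hv' | hv'
    · simpa [hv, hv'] using sq_nonneg (u - v)
    · rw [min_eq_left hv, max_eq_left hv']
      nlinarith
  · rw [min_eq_right hv, max_eq_right (hlo.trans hhi)]
    nlinarith

open scoped Classical in
def optimalMaskEntry (a b c : ℝ) : ℝ :=
  if c = 0 ∨ a * b ≤ 1 then 0
  else if c ^ 2 ≤ a * b - 1 then 1
  else Real.sqrt ((a * b - 1) / c ^ 2)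

theorem sq_mul_optimalMaskEntry (a b : ℝ) {c : ℝ} (hc : c ≠ 0) :
    (c * optimalMaskEntry a b c) ^ 2 = max 0 (min (a * b - 1) (c ^ 2)) := by
  unfold optimalMaskEntry
  by_cases h₁ : a * b ≤ 1
  · rw [if_pos (Or.inr h₁), min_eq_left (by nlinarith [sq_nonneg c])]
    simp [h₁]
  rw [if_neg (by tauto)]
  by_cases h₂ : c ^ 2 ≤ a * b - 1
  · rw [if_pos h₂, min_eq_right h₂, max_eq_right (sq_nonneg c)]
    ring
  · rw [if_neg h₂, min_eq_left (by linarith), max_eq_right (by linarith), mul_pow,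
      Real.sq_sqrt (div_nonneg (by linarith) (sq_nonneg c))]
    field_simp

open scoped Classical in
theorem stmt_8_general (a b c : ℝ)
    (hC : (!![a, c; c, b] : Matrix (Fin 2) (Fin 2) ℝ).PosSemidef)
    (mstar : ℝ)
    (hm : mstar =
      if c = 0 ∨ a * b ≤ 1 then 0
      else if c ^ 2 ≤ a * b - 1 then 1
      else Real.sqrt ((a * b - 1) / c ^ 2)) :
    ∀ M : Matrix (Fin 2) (Fin 2) ℝ, IsMask M →
      linxMask 2 1 !![a, c; c, b] !![1, mstar; mstar, 1]
        ≤ linxMask 2 1 !![a, c; c, b] M := by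
  intro M hM
  obtain ⟨m, hm₁, rfl⟩ := hM.exists_eq_fin_two
  rw [linxMask, linxMask, hadamard_mask_fin_two, hadamard_mask_fin_two]
  rcases eq_or_ne c 0 with rfl | hc
  · simp
  obtain ⟨ha, hb⟩ := hC.pos_of_fin_two hc
  have hstar : (c * mstar) ^ 2 = max 0 (min (a * b - 1) (c ^ 2)) := by
    rw [hm]
    exact sq_mul_optimalMaskEntry a b hc
  refine sSup_fLinx_fin_two_le_of_sq_le ha hb ?_
  rw [hstar]
  exact sq_max_min_sub_le ⟨sq_nonneg _, by nlinarith [sq_nonneg c]⟩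

open scoped Classical in
theorem stmt_8 (a b c : ℝ) (hab : b ≤ a)
    (hC : (!![a, c; c, b] : Matrix (Fin 2) (Fin 2) ℝ).PosSemidef)
    (mstar : ℝ)
    (hm : mstar =
      if c = 0 ∨ a * b ≤ 1 then 0
      else if c ^ 2 ≤ a * b - 1 then 1
      else Real.sqrt ((a * b - 1) / c ^ 2)) :
    ∀ M : Matrix (Fin 2) (Fin 2) ℝ, IsMask M →
      linxMask 2 1 !![a, c; c, b] !![1, mstar; mstar, 1]
        ≤ linxMask 2 1 !![a, c; c, b] M :=
  stmt_8_general a b c hC mstar hm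
end
end

section
/- Suppose τ₁ > 0, τ₂ ≥ 0, and 0 < s < n is an integer. Let C = τ₁·I_n + τ₂·J_n, where I_n is the identity matrix and J_n is the all-ones matrix of order n. Then x̂ = (s/n)·e is an optimal solution for max{f(C,s;x) : x ∈ P(n,s)}. -/
/-!
`log det` is concave on positive definite matrices: after the congruence `A = Rᴴ R` one may take
`A = 1`, where `det (a • 1 + b • S) ≥ det S ^ b` is weighted AM-GM on the eigenvalues of `S`.
Since `x ↦ C Diag(x) C + Diag(e - x)` is affine and positive definite on the box `[0,1]ⁿ` when `C`
is, `f(C,s;·)` is concave there. For `C = τ₁ I + τ₂ J` it is moreover invariant under every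
permutation of coordinates, so averaging the `n` cyclic shifts of a feasible `x`, which is `x̂`,
gives `f(x) ≤ f(x̂)` by Jensen's inequality.
-/

open Matrix Real Set

noncomputable section

namespace Matrix

variable {ι α : Type*}

lemma convex_setOf_posDef : Convex ℝ {A : Matrix ι ι ℝ | A.PosDef} := by
  intro A hA B hB a b ha hb hab
  rcases ha.eq_or_lt with rfl | ha
  · simpa [show b = 1 by linarith] using hB
  · exact (PosDef.smul hA ha).add_posSemidef (hB.posSemidef.smul hb)

variable [DecidableEq ι]

lemma smul_one_add_smul_of_one_submatrix (σ : ι ≃ ι) (τ₁ τ₂ : ℝ) :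
    (τ₁ • (1 : Matrix ι ι ℝ) + τ₂ • of fun _ _ => (1 : ℝ)).submatrix σ σ =
      τ₁ • (1 : Matrix ι ι ℝ) + τ₂ • of fun _ _ => (1 : ℝ) := by
  ext i j
  simp [one_apply]

variable [Fintype ι]

lemma det_conjStarAlgAut [CommRing α] [StarRing α] (U : unitary (Matrix ι ι α))
    (X : Matrix ι ι α) : (Unitary.conjStarAlgAut α _ U X).det = X.det := by
  rw [Unitary.conjStarAlgAut_apply, det_mul, det_mul, mul_right_comm, ← det_mul,
    Unitary.mul_star_self_of_mem U.2, det_one, one_mul]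

lemma det_star_mul_mul [CommRing α] [StarRing α] (R X : Matrix ι ι α) :
    (star R * X * R).det = (star R * R).det * X.det := by
  rw [det_mul, det_mul, det_mul]
  ring

lemma PosDef.det_rpow_le_det_smul_one_add_smul {S : Matrix ι ι ℝ} (hS : S.PosDef)
    {a b : ℝ} (ha : 0 ≤ a) (hb : 0 ≤ b) (hab : a + b = 1) :
    S.det ^ b ≤ (a • (1 : Matrix ι ι ℝ) + b • S).det := by
  set μ := hS.1.eigenvalues
  have hdiag : a • (1 : Matrix ι ι ℝ) + b • S =
      Unitary.conjStarAlgAut ℝ _ hS.1.eigenvectorUnitary (diagonal fun i => a + b * μ i) := by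
    have : (diagonal fun i => a + b * μ i) = a • 1 + b • diagonal (RCLike.ofReal ∘ μ) := by
      rw [← diagonal_smul, smul_one_eq_diagonal, diagonal_add]
      rfl
    rw [this, map_add, map_smul, map_smul, map_one, ← hS.1.spectral_theorem]
  have hdet : S.det = ∏ i, μ i := by simpa using hS.1.det_eq_prod_eigenvalues
  rw [hdiag, det_conjStarAlgAut, det_diagonal, hdet,
    ← finsetProd_rpow _ _ fun i _ => (hS.eigenvalues_pos i).le]
  refine Finset.prod_le_prod (fun i _ => rpow_nonneg (hS.eigenvalues_pos i).le b) fun i _ => ?_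
  simpa using geom_mean_le_arith_mean2_weighted ha hb zero_le_one (hS.eigenvalues_pos i).le hab

open scoped MatrixOrder in
lemma PosDef.det_rpow_mul_det_rpow_le {A B : Matrix ι ι ℝ} (hA : A.PosDef) (hB : B.PosDef)
    {a b : ℝ} (ha : 0 ≤ a) (hb : 0 ≤ b) (hab : a + b = 1) :
    A.det ^ a * B.det ^ b ≤ (a • A + b • B).det := by
  obtain ⟨R, rfl⟩ := CStarAlgebra.nonneg_iff_eq_star_mul_self.mp hA.posSemidef.nonneg
  have hR : IsUnit R.det :=
    isUnit_iff_ne_zero.mpr <| right_ne_zero_of_mul (det_mul (star R) R ▸ hA.det_pos.ne')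
  set S := star R⁻¹ * B * R⁻¹
  have hS : S.PosDef := (IsUnit.posDef_star_left_conjugate_iff
    (isUnit_nonsing_inv_iff.mpr ((isUnit_iff_isUnit_det R).mpr hR))).mpr hB
  have hBS : B = star R * S * R := by
    have hRR : R⁻¹ * R = 1 := nonsing_inv_mul R hR
    calc B = star (R⁻¹ * R) * B * (R⁻¹ * R) := by rw [hRR, star_one, one_mul, mul_one]
      _ = star R * S * R := by simp only [S, star_mul, mul_assoc]
  have hsum : a • (star R * R) + b • B = star R * (a • 1 + b • S) * R := by
    rw [hBS]
    simp only [mul_add, add_mul, mul_smul_comm, smul_mul_assoc, mul_one]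
  set d := (star R * R).det
  have hd : 0 < d := hA.det_pos
  calc d ^ a * B.det ^ b = d * S.det ^ b := by
        rw [hBS, det_star_mul_mul, mul_rpow hd.le hS.det_pos.le, ← mul_assoc, ← rpow_add hd,
          hab, rpow_one]
    _ ≤ d * (a • 1 + b • S).det :=
        mul_le_mul_of_nonneg_left (hS.det_rpow_le_det_smul_one_add_smul ha hb hab) hd.le
    _ = (a • (star R * R) + b • B).det := by rw [hsum, det_star_mul_mul]

theorem concaveOn_log_det : ConcaveOn ℝ {A : Matrix ι ι ℝ | A.PosDef} fun A => log A.det := by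
  refine ⟨convex_setOf_posDef, fun A hA B hB a b ha hb hab => ?_⟩
  have hA' : 0 < A.det ^ a := rpow_pos_of_pos hA.det_pos a
  have hB' : 0 < B.det ^ b := rpow_pos_of_pos hB.det_pos b
  calc a • log A.det + b • log B.det = log (A.det ^ a * B.det ^ b) := by
        rw [log_mul hA'.ne' hB'.ne', log_rpow hA.det_pos, log_rpow hB.det_pos, smul_eq_mul,
          smul_eq_mul]
    _ ≤ log (a • A + b • B).det :=
        log_le_log (mul_pos hA' hB') (PosDef.det_rpow_mul_det_rpow_le hA hB ha hb hab)

lemma posDef_smul_one_add_smul_of_one {τ₁ τ₂ : ℝ} (hτ₁ : 0 < τ₁) (hτ₂ : 0 ≤ τ₂) :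
    (τ₁ • (1 : Matrix ι ι ℝ) + τ₂ • of fun _ _ => (1 : ℝ)).PosDef := by
  have hJ : (of fun _ _ => (1 : ℝ) : Matrix ι ι ℝ).PosSemidef := by
    simpa [vecMulVec] using posSemidef_vecMulVec_self_star (fun _ : ι => (1 : ℝ))
  exact (PosDef.one.smul hτ₁).add_posSemidef (hJ.smul hτ₂)

end Matrix

lemma ConcaveOn.le_apply_const_average {ι : Type*} [Fintype ι] [AddGroup ι]
    {s : Set (ι → ℝ)} {f : (ι → ℝ) → ℝ} (hf : ConcaveOn ℝ s f)
    (hs : ∀ k, ∀ x ∈ s, (fun i => x (k + i)) ∈ s)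
    (hfs : ∀ k, ∀ x ∈ s, f (fun i => x (k + i)) = f x) {x : ι → ℝ} (hx : x ∈ s) :
    f x ≤ f fun _ => (∑ i, x i) / Fintype.card ι := by
  have hcard : (0 : ℝ) < Fintype.card ι := by exact_mod_cast Fintype.card_pos
  have hmean : ∑ k, (Fintype.card ι : ℝ)⁻¹ • (fun i => x (k + i)) =
      fun _ => (∑ i, x i) / Fintype.card ι := by
    ext i
    simp only [Finset.sum_apply, Pi.smul_apply, smul_eq_mul, ← Finset.mul_sum, div_eq_inv_mul]
    exact congrArg _ (Equiv.sum_comp (Equiv.addRight i) x)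
  calc f x = ∑ k : ι, (Fintype.card ι : ℝ)⁻¹ • f (fun i => x (k + i)) := by
        simp [hfs _ x hx, Finset.card_univ, hcard.ne']
    _ ≤ f fun _ => (∑ i, x i) / Fintype.card ι :=
        hmean ▸ hf.le_map_sum (fun _ _ => by positivity) (by simp [Finset.card_univ, hcard.ne'])
          fun k _ => hs k x hx

def linxMatrix {ι : Type*} [Fintype ι] [DecidableEq ι] (C : Matrix ι ι ℝ) (x : ι → ℝ) :
    Matrix ι ι ℝ :=
  C * diagonal x * C + diagonal fun i => 1 - x i

section linxMatrix

variable {ι : Type*} [Fintype ι] [DecidableEq ι] {C : Matrix ι ι ℝ}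

lemma mul_eq_zero_of_mul_sq_add_one_sub_mul_sq_eq_zero {t v w : ℝ} (ht₀ : 0 ≤ t) (ht₁ : t ≤ 1)
    (h : t * w ^ 2 + (1 - t) * v ^ 2 = 0) : v * w = 0 := by
  have hw : t * w ^ 2 = 0 := by
    nlinarith [mul_nonneg ht₀ (sq_nonneg w), mul_nonneg (sub_nonneg.2 ht₁) (sq_nonneg v)]
  have hv : (1 - t) * v ^ 2 = 0 := by linarith
  have : (v * w) ^ 2 = 0 := by linear_combination v ^ 2 * hw + w ^ 2 * hv
  exact pow_eq_zero_iff two_ne_zero |>.mp this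

lemma dotProduct_linxMatrix_mulVec (hC : C.IsHermitian) (x v : ι → ℝ) :
    v ⬝ᵥ (linxMatrix C x *ᵥ v) = ∑ i, (x i * (C *ᵥ v) i ^ 2 + (1 - x i) * v i ^ 2) := by
  have hCT : Cᵀ = C := hC.eq
  rw [linxMatrix, add_mulVec, dotProduct_add, ← mulVec_mulVec, ← mulVec_mulVec,
    dotProduct_mulVec v C, ← mulVec_transpose, hCT]
  simp only [dotProduct, mulVec_diagonal, ← Finset.sum_add_distrib]
  exact Finset.sum_congr rfl fun i _ => by ring

lemma posDef_linxMatrix (hC : C.PosDef) {x : ι → ℝ} (hx : x ∈ Icc 0 1) :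
    (linxMatrix C x).PosDef := by
  refine .of_dotProduct_mulVec_pos ?_ fun v hv => ?_
  · refine IsHermitian.add ?_ (isHermitian_diagonal _)
    simpa only [hC.1.eq] using isHermitian_conjTranspose_mul_mul C (isHermitian_diagonal x)
  have hterm (i : ι) : 0 ≤ x i * (C *ᵥ v) i ^ 2 + (1 - x i) * v i ^ 2 :=
    add_nonneg (mul_nonneg (hx.1 i) (sq_nonneg _))
      (mul_nonneg (sub_nonneg.2 (hx.2 i)) (sq_nonneg _))
  rw [star_trivial, dotProduct_linxMatrix_mulVec hC.1]
  refine (Finset.sum_nonneg fun i _ => hterm i).lt_of_ne fun h => ?_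
  have hzero := (Finset.sum_eq_zero_iff_of_nonneg fun i _ => hterm i).mp h.symm
  have : v ⬝ᵥ (C *ᵥ v) = 0 := Finset.sum_eq_zero fun i hi =>
    mul_eq_zero_of_mul_sq_add_one_sub_mul_sq_eq_zero (hx.1 i) (hx.2 i) (hzero i hi)
  exact (hC.dotProduct_mulVec_pos hv).ne' (by simpa using this)

lemma linxMatrix_add {x y : ι → ℝ} {a b : ℝ} (hab : a + b = 1) :
    linxMatrix C (a • x + b • y) = a • linxMatrix C x + b • linxMatrix C y := by
  have hdiag (u v : ι → ℝ) : diagonal (a • u + b • v) = a • diagonal u + b • diagonal v := by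
    rw [← diagonal_smul, ← diagonal_smul, diagonal_add]
    rfl
  have hsub : (fun i => 1 - (a • x + b • y) i) = a • (fun i => 1 - x i) + b • fun i => 1 - y i := by
    ext i
    simp only [Pi.add_apply, Pi.smul_apply, smul_eq_mul]
    linear_combination -hab
  rw [linxMatrix, linxMatrix, linxMatrix, hsub, hdiag, hdiag]
  simp only [mul_add, add_mul, mul_smul_comm, smul_mul_assoc, smul_add]
  abel

lemma linxMatrix_comp_equiv (σ : ι ≃ ι) (hσ : C.submatrix σ σ = C) (x : ι → ℝ) :
    linxMatrix C (x ∘ σ) = (linxMatrix C x).submatrix σ σ := by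
  change _ = (C * diagonal x * C).submatrix σ σ + (diagonal fun i => 1 - x i).submatrix σ σ
  rw [← submatrix_mul_equiv _ C _ σ, ← submatrix_mul_equiv C _ _ σ, submatrix_diagonal_equiv,
    submatrix_diagonal_equiv, hσ]
  rfl

end linxMatrix

section fLinx

variable {n : ℕ} {C : Matrix (Fin n) (Fin n) ℝ}

lemma fLinx_eq_log_det_linxMatrix (x : Fin n → ℝ) :
    fLinx C x = 1 / 2 * log (linxMatrix C x).det :=
  rfl

lemma concaveOn_fLinx (hC : C.PosDef) : ConcaveOn ℝ (Icc 0 1) (fLinx C) := by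
  refine ⟨convex_Icc 0 1, fun x hx y hy a b ha hb hab => ?_⟩
  have := concaveOn_log_det.2 (posDef_linxMatrix hC hx) (posDef_linxMatrix hC hy) ha hb hab
  simp only [fLinx_eq_log_det_linxMatrix, linxMatrix_add hab, smul_eq_mul] at this ⊢
  linarith

lemma fLinx_comp_equiv (σ : Fin n ≃ Fin n) (hσ : C.submatrix σ σ = C) (x : Fin n → ℝ) :
    fLinx C (x ∘ σ) = fLinx C x := by
  rw [fLinx_eq_log_det_linxMatrix, fLinx_eq_log_det_linxMatrix, linxMatrix_comp_equiv σ hσ,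
    det_submatrix_equiv_self]

end fLinx

lemma PP_subset_Icc (n s : ℕ) : PP n s ⊆ Icc 0 1 :=
  fun _ hx => ⟨fun i => (hx.2 i).1, fun i => (hx.2 i).2⟩

lemma const_div_mem_PP {n s : ℕ} (h : s ≤ n) : (fun _ => (s : ℝ) / n) ∈ PP n s := by
  rcases Nat.eq_zero_or_pos n with rfl | hn
  · obtain rfl := Nat.le_zero.mp h
    simp [PP]
  · have hn' : (0 : ℝ) < n := by exact_mod_cast hn
    refine ⟨?_, fun _ => ⟨by positivity, div_le_one_of_le₀ (by exact_mod_cast h) hn'.le⟩⟩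
    simp [Finset.card_univ, mul_div_cancel₀ _ hn'.ne']

theorem stmt_13_general (n s : ℕ) (hsn : s < n)
    (τ₁ τ₂ : ℝ) (hτ₁ : 0 < τ₁) (hτ₂ : 0 ≤ τ₂)
    (C : Matrix (Fin n) (Fin n) ℝ)
    (hC : C = τ₁ • (1 : Matrix (Fin n) (Fin n) ℝ) + τ₂ • Matrix.of (fun _ _ => (1 : ℝ)))
    (xh : Fin n → ℝ) (hxh : xh = fun _ => (s : ℝ) / (n : ℝ)) :
    xh ∈ PP n s ∧ ∀ x ∈ PP n s, fLinx C x ≤ fLinx C xh := by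
  subst hxh
  -- `Fin n` is an additive group only for `n ≠ 0`.
  have : NeZero n := ⟨by omega⟩
  have hCpos : C.PosDef := hC ▸ posDef_smul_one_add_smul_of_one hτ₁ hτ₂
  have hCσ (σ : Fin n ≃ Fin n) : C.submatrix σ σ = C :=
    hC ▸ smul_one_add_smul_of_one_submatrix σ τ₁ τ₂
  refine ⟨const_div_mem_PP hsn.le, fun x hx => ?_⟩
  have hshift_mem (k : Fin n) (y : Fin n → ℝ) (hy : y ∈ Icc 0 1) : (fun i => y (k + i)) ∈ Icc 0 1 :=
    ⟨fun i => hy.1 (k + i), fun i => hy.2 (k + i)⟩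
  simpa only [hx.1, Fintype.card_fin] using (concaveOn_fLinx hCpos).le_apply_const_average hshift_mem
    (fun k y _ => fLinx_comp_equiv (Equiv.addLeft k) (hCσ _) y) (PP_subset_Icc n s hx)

theorem stmt_13 (n s : ℕ) (hs : 0 < s) (hsn : s < n)
    (τ₁ τ₂ : ℝ) (hτ₁ : 0 < τ₁) (hτ₂ : 0 ≤ τ₂)
    (C : Matrix (Fin n) (Fin n) ℝ)
    (hC : C = τ₁ • (1 : Matrix (Fin n) (Fin n) ℝ) + τ₂ • Matrix.of (fun _ _ => (1 : ℝ)))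
    (xh : Fin n → ℝ) (hxh : xh = fun _ => (s : ℝ) / (n : ℝ)) :
    xh ∈ PP n s ∧ ∀ x ∈ PP n s, fLinx C x ≤ fLinx C xh :=
  stmt_13_general n s hsn τ₁ τ₂ hτ₁ hτ₂ C hC xh hxh
end
end
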